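/- Let n ≥ 1, μ > 0, let P be a real orthogonal n×n matrix, d ∈ ℝ^n, and set X = P·Diag(d)·Pᵀ and Z = P·Diag(φ_μ(d₁),…,φ_μ(d_n))·Pᵀ. Then Z is the unique minimizer of W ↦ ½‖W − X‖_F² − μ log det W over the set of symmetric positive definite n×n matrices W: for every symmetric positive definite W with W ≠ Z, ½‖Z − X‖_F² − μ log det Z < ½‖W − X‖_F² − μ log det W. That is, Prox_{μr}(X) = φ_μ^+(X) where r(W) = −log det W. -/

import Mathlib

/-!
Write `f(W) = ½‖W − X‖_F² − μ log det W`. Since `φ_μ(t)(φ_μ(t) − t) = μ`, the matrix `Z` satisfies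
the stationarity equation `Z − X = μ Z⁻¹`. Expanding the square around `Z` then gives
`f(W) − f(Z) = ½‖W − Z‖_F² + μ (tr(Z⁻¹W) − n − log det (Z⁻¹W))`, and the last term is nonnegative
by `log x ≤ x − 1` applied to the (positive) eigenvalues of `B W Bᵀ`, where `Z⁻¹ = BᵀB`.
-/

open Matrix

/-- The scalar function `φ_μ(t) = (√(t² + 4μ) + t)/2`. -/
noncomputable def phiMu (μ t : ℝ) : ℝ := (Real.sqrt (t ^ 2 + 4 * μ) + t) / 2

open scoped MatrixOrder

lemma phiMu_pos {μ : ℝ} (hμ : 0 < μ) (t : ℝ) : 0 < phiMu μ t := by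
  have h : |t| < Real.sqrt (t ^ 2 + 4 * μ) := by
    rw [← Real.sqrt_sq_eq_abs]
    exact Real.sqrt_lt_sqrt (sq_nonneg t) (by linarith)
  unfold phiMu
  linarith [neg_abs_le t]

lemma phiMu_sub_self {μ : ℝ} (hμ : 0 < μ) (t : ℝ) : phiMu μ t - t = μ / phiMu μ t := by
  have h : Real.sqrt (t ^ 2 + 4 * μ) ^ 2 = t ^ 2 + 4 * μ := Real.sq_sqrt (by positivity)
  rw [eq_div_iff (phiMu_pos hμ t).ne']
  unfold phiMu
  linear_combination h / 4

namespace Matrix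

lemma trace_mul_transpose_eq_sum_sum {m n R : Type*} [Fintype m] [Fintype n]
    [NonUnitalNonAssocSemiring R] (A B : Matrix m n R) :
    (A * Bᵀ).trace = ∑ i, ∑ j, A i j * B i j := by
  simp [trace, mul_apply]

lemma sum_sum_sq_pos_of_ne_zero {m n : Type*} [Fintype m] [Fintype n] {A : Matrix m n ℝ}
    (hA : A ≠ 0) :
    0 < ∑ i, ∑ j, A i j ^ 2 := by
  obtain ⟨i, j, hij⟩ : ∃ i j, A i j ≠ 0 := by
    by_contra! h
    exact hA (ext h)
  exact Finset.sum_pos' (fun i _ => Finset.sum_nonneg fun j _ => sq_nonneg _)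
    ⟨i, Finset.mem_univ i, Finset.sum_pos' (fun j _ => sq_nonneg _)
      ⟨j, Finset.mem_univ j, by positivity⟩⟩

variable {ι : Type*} [Fintype ι] [DecidableEq ι]

lemma PosDef.log_det_le_trace_sub_card {S : Matrix ι ι ℝ} (hS : S.PosDef) :
    Real.log S.det ≤ S.trace - Fintype.card ι := by
  have hev := hS.eigenvalues_pos
  rw [hS.isHermitian.det_eq_prod_eigenvalues, hS.isHermitian.trace_eq_sum_eigenvalues]
  simp only [RCLike.ofReal_real_eq_id, id]
  rw [Real.log_prod fun i _ => (hev i).ne']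
  calc ∑ i, Real.log (hS.isHermitian.eigenvalues i)
      ≤ ∑ i, (hS.isHermitian.eigenvalues i - 1) :=
        Finset.sum_le_sum fun i _ => Real.log_le_sub_one_of_pos (hev i)
    _ = _ := by simp [Finset.sum_sub_distrib]

lemma PosDef.log_det_sub_log_det_le {W Z : Matrix ι ι ℝ} (hW : W.PosDef) (hZ : Z.PosDef) :
    Real.log W.det - Real.log Z.det ≤ (Z⁻¹ * W).trace - Fintype.card ι := by
  obtain ⟨B, hB⟩ := CStarAlgebra.nonneg_iff_eq_star_mul_self.mp hZ.inv.posSemidef.nonneg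
  rw [star_eq_conjTranspose, conjTranspose_eq_transpose_of_trivial] at hB
  have hdet : (B * W * Bᵀ).det = W.det * (Z.det)⁻¹ := by
    rw [det_mul, det_mul, det_transpose, ← Ring.inverse_eq_inv', ← det_nonsing_inv, hB,
      det_mul, det_transpose]
    ring
  have hS : (B * W * Bᵀ).PosDef := by
    have hpsd := hW.posSemidef.mul_mul_conjTranspose_same B
    rw [conjTranspose_eq_transpose_of_trivial] at hpsd
    refine hpsd.posDef_iff_det_ne_zero.mpr ?_
    rw [hdet]
    exact mul_ne_zero hW.det_pos.ne' (inv_ne_zero hZ.det_pos.ne')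
  have htr : (B * W * Bᵀ).trace = (Z⁻¹ * W).trace := by
    rw [trace_mul_comm, ← Matrix.mul_assoc, hB]
  have hlog := hS.log_det_le_trace_sub_card
  rw [hdet, htr, Real.log_mul hW.det_pos.ne' (inv_ne_zero hZ.det_pos.ne'), Real.log_inv] at hlog
  linarith

theorem PosDef.prox_log_det_objective_add_half_sum_sq_le {μ : ℝ} (hμ : 0 ≤ μ)
    {X Z W : Matrix ι ι ℝ} (hZ : Z.PosDef) (hW : W.PosDef) (hZX : Z - X = μ • Z⁻¹) :
    (1 / 2) * ∑ i, ∑ j, (Z i j - X i j) ^ 2 - μ * Real.log Z.det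
        + (1 / 2) * ∑ i, ∑ j, (W i j - Z i j) ^ 2
      ≤ (1 / 2) * ∑ i, ∑ j, (W i j - X i j) ^ 2 - μ * Real.log W.det := by
  have hexpand : ∑ i, ∑ j, (W i j - X i j) ^ 2 = ∑ i, ∑ j, (Z i j - X i j) ^ 2
      + 2 * ∑ i, ∑ j, (Z i j - X i j) * (W i j - Z i j) + ∑ i, ∑ j, (W i j - Z i j) ^ 2 := by
    simp only [Finset.mul_sum, ← Finset.sum_add_distrib]
    exact Fintype.sum_congr _ _ fun i => Fintype.sum_congr _ _ fun j => by ring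
  have hcross : ∑ i, ∑ j, (Z i j - X i j) * (W i j - Z i j)
      = μ * ((Z⁻¹ * W).trace - Fintype.card ι) := by
    have hsymm : (W - Z)ᵀ = W - Z := by
      rw [← conjTranspose_eq_transpose_of_trivial, conjTranspose_sub, hW.isHermitian.eq,
        hZ.isHermitian.eq]
    have hinv : Z⁻¹ * Z = 1 := nonsing_inv_mul Z ((isUnit_iff_isUnit_det Z).mp hZ.isUnit)
    calc ∑ i, ∑ j, (Z i j - X i j) * (W i j - Z i j) = ((Z - X) * (W - Z)ᵀ).trace :=
          (trace_mul_transpose_eq_sum_sum _ _).symm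
      _ = μ * ((Z⁻¹ * W).trace - Fintype.card ι) := by
          rw [hsymm, hZX, Matrix.smul_mul, trace_smul, Matrix.mul_sub, trace_sub, hinv, trace_one,
            smul_eq_mul]
  have hlog := mul_le_mul_of_nonneg_left (hW.log_det_sub_log_det_le hZ) hμ
  rw [hexpand, hcross]
  linarith

section Orthogonal

variable {P : Matrix ι ι ℝ}

lemma conj_diagonal_mul_conj_diagonal (hP : Pᵀ * P = 1) (f g : ι → ℝ) :
    P * diagonal f * Pᵀ * (P * diagonal g * Pᵀ) = P * diagonal (f * g) * Pᵀ := by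
  calc P * diagonal f * Pᵀ * (P * diagonal g * Pᵀ)
      = P * diagonal f * (Pᵀ * P) * diagonal g * Pᵀ := by simp only [Matrix.mul_assoc]
    _ = P * diagonal (f * g) * Pᵀ := by
        rw [hP, Matrix.mul_one, Matrix.mul_assoc P, diagonal_mul_diagonal]
        rfl

lemma posDef_conj_diagonal (hP : Pᵀ * P = 1) {f : ι → ℝ} (hf : ∀ i, 0 < f i) :
    (P * diagonal f * Pᵀ).PosDef := by
  have hPunit : IsUnit P := (isUnit_iff_isUnit_det P).mpr (isUnit_det_of_left_inverse hP)
  simpa [conjTranspose_eq_transpose_of_trivial] using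
    (PosDef.diagonal hf).mul_mul_conjTranspose_same (vecMul_injective_iff_isUnit.mpr hPunit)

lemma inv_conj_diagonal (hP : Pᵀ * P = 1) {f : ι → ℝ} (hf : ∀ i, f i ≠ 0) :
    (P * diagonal f * Pᵀ)⁻¹ = P * diagonal f⁻¹ * Pᵀ := by
  refine inv_eq_right_inv ?_
  have hff : f * f⁻¹ = fun _ => 1 := funext fun i => mul_inv_cancel₀ (hf i)
  rw [conj_diagonal_mul_conj_diagonal hP, hff, diagonal_one, Matrix.mul_one, mul_eq_one_comm.mp hP]

lemma conj_diagonal_phiMu_sub_eq_smul_inv (hP : Pᵀ * P = 1) {μ : ℝ} (hμ : 0 < μ) (d : ι → ℝ) :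
    P * diagonal (fun i => phiMu μ (d i)) * Pᵀ - P * diagonal d * Pᵀ
      = μ • (P * diagonal (fun i => phiMu μ (d i)) * Pᵀ)⁻¹ := by
  rw [inv_conj_diagonal hP fun i => (phiMu_pos hμ (d i)).ne', ← Matrix.sub_mul, ← Matrix.mul_sub,
    diagonal_sub, ← Matrix.smul_mul, ← Matrix.mul_smul, ← diagonal_smul]
  congr 3
  funext i
  simp [phiMu_sub_self hμ, div_eq_mul_inv]

end Orthogonal

end Matrix

theorem prox_log_det_is_phi_general (n : ℕ) (μ : ℝ) (hμ : 0 < μ)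
    (P : Matrix (Fin n) (Fin n) ℝ) (hP : Pᵀ * P = 1) (d : Fin n → ℝ)
    (X Z : Matrix (Fin n) (Fin n) ℝ)
    (hX : X = P * Matrix.diagonal d * Pᵀ)
    (hZ : Z = P * Matrix.diagonal (fun i => phiMu μ (d i)) * Pᵀ) :
    ∀ W : Matrix (Fin n) (Fin n) ℝ, W.PosDef → W ≠ Z →
      (1 / 2) * ∑ i : Fin n, ∑ j : Fin n, (Z i j - X i j) ^ 2 - μ * Real.log Z.det
        < (1 / 2) * ∑ i : Fin n, ∑ j : Fin n, (W i j - X i j) ^ 2 - μ * Real.log W.det := by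
  intro W hW hWZ
  have hZpos : Z.PosDef := hZ ▸ posDef_conj_diagonal hP fun i => phiMu_pos hμ (d i)
  have hZX : Z - X = μ • Z⁻¹ := hX ▸ hZ ▸ conj_diagonal_phiMu_sub_eq_smul_inv hP hμ d
  have hgap : 0 < ∑ i, ∑ j, (W i j - Z i j) ^ 2 := sum_sum_sq_pos_of_ne_zero (sub_ne_zero.mpr hWZ)
  linarith [hZpos.prox_log_det_objective_add_half_sum_sq_le hμ.le hW hZX]

/-- `Prox_{μr}(X) = φ_μ^+(X)` where `r(W) = −log det W`.
For `μ > 0`, `P` orthogonal, `X = P Diag(d) Pᵀ` and `Z = P Diag(φ_μ(d)) Pᵀ`, the matrix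
`Z` is the unique minimizer of `W ↦ ½‖W − X‖_F² − μ log det W` over symmetric positive
definite matrices. -/
theorem prox_log_det_is_phi (n : ℕ) (hn : 1 ≤ n) (μ : ℝ) (hμ : 0 < μ)
    (P : Matrix (Fin n) (Fin n) ℝ) (hP : Pᵀ * P = 1) (d : Fin n → ℝ)
    (X Z : Matrix (Fin n) (Fin n) ℝ)
    (hX : X = P * Matrix.diagonal d * Pᵀ)
    (hZ : Z = P * Matrix.diagonal (fun i => phiMu μ (d i)) * Pᵀ) :
    ∀ W : Matrix (Fin n) (Fin n) ℝ, W.PosDef → W ≠ Z →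
      (1 / 2) * ∑ i : Fin n, ∑ j : Fin n, (Z i j - X i j) ^ 2 - μ * Real.log Z.det
        < (1 / 2) * ∑ i : Fin n, ∑ j : Fin n, (W i j - X i j) ^ 2 - μ * Real.log W.det :=
  prox_log_det_is_phi_general n μ hμ P hP d X Z hX hZ
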